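/- Let G be a locally compact Hausdorff group and let H ≤ G be a closed subgroup. If there exists a Haar measure on the coset space G/H, i.e. a Radon measure ξ on G/H that is strictly positive on nonempty open sets and G-invariant (ξ(gE) = ξ(E) for every Borel set E ⊆ G/H and every g ∈ G), then the modular functions satisfy Δ_G(h) = Δ_H(h) for all h ∈ H. -/

import Mathlib

open MeasureTheory

/-- A left Haar measure: a Radon measure (finite on compacts, outer regular, inner regular
on open sets) that is strictly positive on nonempty open sets and left-translation
invariant. -/
def IsLeftHaar {G : Type*} [Group G] [TopologicalSpace G] [MeasurableSpace G]
    (μ : Measure G) : Prop :=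
  μ.Regular ∧ μ.IsOpenPosMeasure ∧
    ∀ (g : G) (E : Set G), MeasurableSet E → μ ((g * ·) '' E) = μ E

open Measure Set Function TopologicalSpace Topology
open scoped Pointwise ENNReal NNReal

namespace ModularAux

variable {G : Type*} [Group G] [TopologicalSpace G] [IsTopologicalGroup G]
    [MeasurableSpace G] [BorelSpace G] {H : Subgroup G}

theorem t2_quotient (hH : IsClosed (H : Set G)) : T2Space (G ⧸ H) := by
  rw [t2_iff_isClosed_diagonal, ← isOpen_compl_iff]
  have hR : IsClosed {p : G × G | QuotientGroup.mk p.1 = (QuotientGroup.mk p.2 : G ⧸ H)} := by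
    have : {p : G × G | QuotientGroup.mk p.1 = (QuotientGroup.mk p.2 : G ⧸ H)}
        = (fun p : G × G => p.1⁻¹ * p.2) ⁻¹' (H : Set G) := by
      ext p
      simp only [mem_setOf_eq, mem_preimage, SetLike.mem_coe]
      exact QuotientGroup.eq
    rw [this]
    exact hH.preimage (continuous_fst.inv.mul continuous_snd)
  have hmk : IsOpenQuotientMap (fun p : G × G =>
      ((QuotientGroup.mk p.1 : G ⧸ H), (QuotientGroup.mk p.2 : G ⧸ H))) :=
    QuotientGroup.isOpenQuotientMap_mk.prodMap QuotientGroup.isOpenQuotientMap_mk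
  have himg : (diagonal (G ⧸ H))ᶜ = (fun p : G × G =>
      ((QuotientGroup.mk p.1 : G ⧸ H), (QuotientGroup.mk p.2 : G ⧸ H))) ''
      {p : G × G | QuotientGroup.mk p.1 = (QuotientGroup.mk p.2 : G ⧸ H)}ᶜ := by
    rw [← Set.image_preimage_eq ((diagonal (G ⧸ H))ᶜ) hmk.surjective]
    congr 1
  rw [himg]
  exact hmk.isOpenMap _ hR.isOpen_compl

theorem opensMeasurable_quotient : OpensMeasurableSpace (G ⧸ H) := by
  constructor
  rw [borel]
  refine MeasurableSpace.generateFrom_le fun s hs => ?_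
  exact measurableSet_quotient.2
    ((hs.preimage QuotientGroup.isOpenQuotientMap_mk.continuous).measurableSet)

instance : BorelSpace ↥H := Subtype.borelSpace (H : Set G)

/-- Averaging over the fibers. -/
noncomputable def Pav (ν : Measure ↥H) (f : G → ℝ) (x : G) : ℝ := ∫ h : ↥H, f (x * ↑h) ∂ν

/-- The descended function on the quotient. -/
noncomputable def Qav (ν : Measure ↥H) (f : G → ℝ) (q : G ⧸ H) : ℝ := Pav ν f q.out

theorem Pav_mul {ν : Measure ↥H} [IsMulLeftInvariant ν] (f : G → ℝ) (x : G) (h : ↥H) :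
    Pav ν f (x * ↑h) = Pav ν f x := by
  unfold Pav
  have : ∀ k : ↥H, f (x * ↑h * ↑k) = (fun k : ↥H => f (x * ↑k)) (h * k) := by
    intro k; simp [mul_assoc]
  simp_rw [this]
  exact integral_mul_left_eq_self (μ := ν) (fun k : ↥H => f (x * ↑k)) h

theorem Qav_mk {ν : Measure ↥H} [IsMulLeftInvariant ν] (f : G → ℝ) (x : G) :
    Qav ν f (QuotientGroup.mk x) = Pav ν f x := by
  obtain ⟨h, hh⟩ := QuotientGroup.mk_out_eq_mul H x
  rw [Qav, hh, Pav_mul]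


theorem exists_ne_zero_of_integral_ne_zero {α : Type*} [MeasurableSpace α]
    {κ : Measure α} {f : α → ℝ} (h : ∫ a, f a ∂κ ≠ 0) : ∃ a, f a ≠ 0 := by
  by_contra hc
  push_neg at hc
  apply h
  have : f = fun _ => (0 : ℝ) := funext hc
  rw [this, integral_zero]

theorem continuous_Pav_param (hH : IsClosed (H : Set G)) (ν : Measure ↥H)
    [IsFiniteMeasureOnCompacts ν] {X : Type*} [TopologicalSpace X] [LocallyCompactSpace X]
    (F : X → G → ℝ) (hF : Continuous (uncurry F)) {K : Set G} (hK : IsCompact K)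
    (hFK : ∀ x y, y ∉ K → F x y = 0) {c : X → G} (hc : Continuous c) :
    Continuous fun x => ∫ h : ↥H, F x (c x * ↑h) ∂ν := by
  rw [continuous_iff_continuousAt]; intro x₀
  obtain ⟨t, t_comp, ht⟩ := exists_compact_mem_nhds x₀
  have hK' : IsCompact ((c '' t)⁻¹ * K) := ((t_comp.image hc).inv).mul hK
  have hk : IsCompact (((↑) : ↥H → G) ⁻¹' ((c '' t)⁻¹ * K)) :=
    (hH.isClosedEmbedding_subtypeVal).isCompact_preimage hK'
  have A : ContinuousOn (fun x => ∫ h : ↥H, F x (c x * ↑h) ∂ν) t := by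
    apply continuousOn_integral_of_compact_support hk
    · apply Continuous.continuousOn
      exact hF.comp (continuous_fst.prodMk
        (((hc.comp continuous_fst).mul (continuous_subtype_val.comp continuous_snd))))
    · intro p h hp hnk
      by_contra hne
      apply hnk
      have hmem : c p * ↑h ∈ K := by
        by_contra hK0
        exact hne (hFK p _ hK0)
      have hmm : (c p)⁻¹ * (c p * ↑h) ∈ (c '' t)⁻¹ * K :=
        Set.mul_mem_mul (Set.inv_mem_inv.2 (mem_image_of_mem c hp)) hmem
      rw [inv_mul_cancel_left] at hmm
      exact hmm
  exact (A.continuousAt ht)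

theorem continuous_Pav [LocallyCompactSpace G] (hH : IsClosed (H : Set G)) (ν : Measure ↥H)
    [IsFiniteMeasureOnCompacts ν] {f : G → ℝ} (hf : Continuous f)
    (h'f : HasCompactSupport f) : Continuous (Pav ν f) := by
  have := continuous_Pav_param (X := G) hH ν (fun _ y => f y)
    (hf.comp continuous_snd) h'f (fun x y hy => image_eq_zero_of_notMem_tsupport hy)
    continuous_id
  unfold Pav
  exact this

theorem continuous_Qav [LocallyCompactSpace G] (hH : IsClosed (H : Set G)) (ν : Measure ↥H)
    [IsFiniteMeasureOnCompacts ν] [IsMulLeftInvariant ν] {f : G → ℝ} (hf : Continuous f)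
    (h'f : HasCompactSupport f) : Continuous (Qav ν f) := by
  rw [← QuotientGroup.isOpenQuotientMap_mk.continuous_comp_iff]
  have : Qav ν f ∘ (QuotientGroup.mk : G → G ⧸ H) = Pav ν f := funext fun x => Qav_mk f x
  rw [this]
  exact continuous_Pav hH ν hf h'f

theorem support_Qav_subset (ν : Measure ↥H) (f : G → ℝ) :
    support (Qav ν f) ⊆ (QuotientGroup.mk : G → G ⧸ H) '' tsupport f := by
  intro q hq
  obtain ⟨h, hh⟩ := exists_ne_zero_of_integral_ne_zero hq
  refine ⟨q.out * ↑h, subset_tsupport f hh, ?_⟩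
  rw [QuotientGroup.mk_mul_of_mem _ h.2, QuotientGroup.out_eq']

theorem hasCompactSupport_Qav (hH : IsClosed (H : Set G)) (ν : Measure ↥H)
    {f : G → ℝ} (h'f : HasCompactSupport f) : HasCompactSupport (Qav ν f) := by
  haveI : T2Space (G ⧸ H) := t2_quotient hH
  have hKc : IsCompact ((QuotientGroup.mk : G → G ⧸ H) '' tsupport f) :=
    h'f.image QuotientGroup.isOpenQuotientMap_mk.continuous
  exact HasCompactSupport.of_support_subset_isCompact hKc (support_Qav_subset ν f)

end ModularAux

open ModularAux

/-- Let `G` be a locally compact Hausdorff group with modular function `Δ_G` and `H ≤ G`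
a closed subgroup with modular function `Δ_H`. If there exists a Haar measure on `G ⧸ H`,
i.e. a Radon measure that is strictly positive on nonempty open sets and invariant under
the `G`-action `g • xH = (gx)H`, then `Δ_G(h) = Δ_H(h)` for all `h ∈ H`. -/
theorem modular_eq_on_subgroup_of_quotient_haar {G : Type*} [Group G] [TopologicalSpace G]
    [IsTopologicalGroup G] [LocallyCompactSpace G] [T2Space G]
    [MeasurableSpace G] [BorelSpace G]
    (H : Subgroup G) (hH : IsClosed (H : Set G))
    (ΔG : G → ℝ) (hΔGpos : ∀ g, 0 < ΔG g)
    (hΔG : ∀ μ : Measure G, IsLeftHaar μ → ∀ (g : G) (E : Set G), MeasurableSet E →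
      μ ((· * g) '' E) = ENNReal.ofReal (ΔG g) * μ E)
    (ΔH : H → ℝ) (hΔHpos : ∀ h, 0 < ΔH h)
    (hΔH : ∀ ν : Measure H, IsLeftHaar ν → ∀ (h : H) (E : Set H), MeasurableSet E →
      ν ((· * h) '' E) = ENNReal.ofReal (ΔH h) * ν E)
    (hξ : ∃ ξ : Measure (G ⧸ H), ξ.Regular ∧ ξ.IsOpenPosMeasure ∧
      ∀ (g : G) (E : Set (G ⧸ H)), MeasurableSet E → ξ ((g • ·) '' E) = ξ E) :
    ∀ h : H, ΔG (h : G) = ΔH h := by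
  obtain ⟨ξ, ξ_reg, ξ_pos, ξ_inv⟩ := hξ
  haveI := ξ_reg
  haveI := ξ_pos
  haveI : T2Space (G ⧸ H) := t2_quotient hH
  haveI : OpensMeasurableSpace (G ⧸ H) := opensMeasurable_quotient
  haveI : LocallyCompactSpace ↥H := hH.locallyCompactSpace
  -- Haar measures
  set μ : Measure G := haarMeasure (Classical.arbitrary (PositiveCompacts G)) with hμdef
  set ν : Measure ↥H := haarMeasure (Classical.arbitrary (PositiveCompacts ↥H)) with hνdef
  have hμLH : μ.Regular ∧ μ.IsOpenPosMeasure ∧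
      ∀ (g : G) (E : Set G), MeasurableSet E → μ ((g * ·) '' E) = μ E :=
    ⟨inferInstance, inferInstance, fun g E _ => by
      rw [Set.image_mul_left, measure_preimage_mul]⟩
  have hνLH : ν.Regular ∧ ν.IsOpenPosMeasure ∧
      ∀ (g : ↥H) (E : Set ↥H), MeasurableSet E → ν ((g * ·) '' E) = ν E :=
    ⟨inferInstance, inferInstance, fun g E _ => by
      rw [Set.image_mul_left, measure_preimage_mul]⟩
  -- right translation of integrals
  have int_μ : ∀ (g : G) (f : G → ℝ), Continuous f →
      ∫ x, f (x * g) ∂μ = ΔG g⁻¹ * ∫ x, f x ∂μ := by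
    intro g f hf
    have hmap : Measure.map (· * g) μ = ENNReal.ofReal (ΔG g⁻¹) • μ := by
      ext E hE
      rw [Measure.map_apply (measurable_mul_const g) hE]
      have himg : (· * g) ⁻¹' E = (· * g⁻¹) '' E := by rw [Set.image_mul_right, inv_inv]
      rw [himg, hΔG μ hμLH g⁻¹ E hE, Measure.smul_apply, smul_eq_mul]
    have h1 : ∫ y, f y ∂(Measure.map (· * g) μ) = ∫ x, f (x * g) ∂μ :=
      integral_map (measurable_mul_const g).aemeasurable hf.aestronglyMeasurable
    rw [← h1, hmap, integral_smul_measure, ENNReal.toReal_ofReal (hΔGpos g⁻¹).le, smul_eq_mul]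
  have int_ν : ∀ (e : ↥H) (F : ↥H → ℝ), Continuous F →
      ∫ k, F (k * e) ∂ν = ΔH e⁻¹ * ∫ k, F k ∂ν := by
    intro e F hF
    have hmap : Measure.map (· * e) ν = ENNReal.ofReal (ΔH e⁻¹) • ν := by
      ext E hE
      rw [Measure.map_apply (measurable_mul_const e) hE]
      have himg : (· * e) ⁻¹' E = (· * e⁻¹) '' E := by rw [Set.image_mul_right, inv_inv]
      rw [himg, hΔH ν hνLH e⁻¹ E hE, Measure.smul_apply, smul_eq_mul]
    have h1 : ∫ y, F y ∂(Measure.map (· * e) ν) = ∫ k, F (k * e) ∂ν :=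
      integral_map (measurable_mul_const e).aemeasurable hF.aestronglyMeasurable
    rw [← h1, hmap, integral_smul_measure, ENNReal.toReal_ofReal (hΔHpos e⁻¹).le, smul_eq_mul]
  -- reference function
  obtain ⟨⟨g₀, g₀cont⟩, g₀comp, g₀nonneg, g₀one⟩ :
      ∃ g : C(G, ℝ), HasCompactSupport g ∧ 0 ≤ g ∧ g 1 ≠ 0 := exists_continuous_nonneg_pos 1
  have int_g₀_pos : 0 < ∫ x, g₀ x ∂μ :=
    g₀cont.integral_pos_of_hasCompactSupport_nonneg_nonzero g₀comp g₀nonneg g₀one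
  -- right invariant measure
  set νR : Measure G := μ.inv with hνRdef
  haveI : IsOpenPosMeasure νR := by
    constructor
    intro U hU hUne
    rw [Measure.inv_apply]
    exact (hU.inv.measure_pos μ (by simpa using hUne.inv)).ne'
  set D : G → ℝ := fun x => ∫ z, g₀ (z⁻¹ * x) ∂νR with hDdef
  have D_cont : Continuous D := continuous_integral_apply_inv_mul g₀cont g₀comp
  have D_pos : ∀ x, 0 < D x := by
    intro x
    have C : Continuous (fun y => g₀ (y⁻¹ * x)) := g₀cont.comp (continuous_inv.mul continuous_const)
    apply (integral_pos_iff_support_of_nonneg _ _).2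
    · apply C.isOpen_support.measure_pos νR
      exact ⟨x * 1⁻¹, by simpa using g₀one⟩
    · exact fun y => g₀nonneg (y⁻¹ * x)
    · apply C.integrable_of_hasCompactSupport
      exact g₀comp.comp_homeomorph ((Homeomorph.inv G).trans (Homeomorph.mulRight x))
  -- the quotient functional
  -- smul measurability and invariance
  have hsme : ∀ y : G, Measurable (fun q : G ⧸ H => (y • q : G ⧸ H)) := by
    intro y s hs
    have key : (Quotient.mk'' : G → G ⧸ H) ⁻¹' ((fun q : G ⧸ H => y • q) ⁻¹' s)
        = (y * ·) ⁻¹' ((Quotient.mk'' : G → G ⧸ H) ⁻¹' s) := by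
      rfl
    rw [measurableSet_quotient, key]
    exact (measurableSet_quotient.1 hs).preimage (measurable_const_mul y)
  have hmapξ : ∀ y : G, Measure.map (fun q : G ⧸ H => y • q) ξ = ξ := by
    intro y
    ext E hE
    rw [Measure.map_apply (hsme y) hE]
    have himg : (fun q : G ⧸ H => y • q) ⁻¹' E = (fun q : G ⧸ H => y⁻¹ • q) '' E := by
      ext q
      constructor
      · intro hq
        exact ⟨y • q, hq, by simp⟩
      · rintro ⟨r, hr, rfl⟩
        simpa [smul_smul] using hr
    rw [himg, ξ_inv y⁻¹ E hE]
  -- left invariance of the functional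
  have lam_inv : ∀ (y : G) (f : G → ℝ), Continuous f → HasCompactSupport f →
      ∫ q, Qav ν (fun x => f (y * x)) q ∂ξ = ∫ q, Qav ν f q ∂ξ := by
    intro y f hf h'f
    have hQsmul : ∀ q : G ⧸ H, Qav ν (fun x => f (y * x)) q = Qav ν f (y • q) := by
      intro q
      obtain ⟨x, rfl⟩ := QuotientGroup.mk_surjective q
      rw [Qav_mk]
      have : (y • (QuotientGroup.mk x : G ⧸ H)) = QuotientGroup.mk (y * x) :=
        MulAction.Quotient.smul_mk H y x
      rw [this, Qav_mk]
      unfold Pav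
      congr 1
      ext h
      rw [mul_assoc]
    have hsm : AEStronglyMeasurable (Qav ν f) (Measure.map (fun q : G ⧸ H => y • q) ξ) :=
      (continuous_Qav hH ν hf h'f).aestronglyMeasurable
    have h2 := integral_map (μ := ξ) ((hsme y).aemeasurable) hsm
    rw [hmapξ y] at h2
    simp_rw [hQsmul]
    exact h2.symm
  -- Fubini for the functional
  have lam_fubini : ∀ W : G → G → ℝ, Continuous (Function.uncurry W) →
      HasCompactSupport (Function.uncurry W) →
      ∫ q, Qav ν (fun x => ∫ y, W x y ∂νR) q ∂ξ
        = ∫ y, ∫ q, Qav ν (fun x => W x y) q ∂ξ ∂νR := by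
    intro W hW h'W
    set K₁ : Set G := Prod.fst '' tsupport (Function.uncurry W) with hK₁def
    set K₂ : Set G := Prod.snd '' tsupport (Function.uncurry W) with hK₂def
    have K₁comp : IsCompact K₁ := h'W.image continuous_fst
    have K₂comp : IsCompact K₂ := h'W.image continuous_snd
    have memK : ∀ x y, W x y ≠ 0 → x ∈ K₁ ∧ y ∈ K₂ := by
      intro x y hxy
      have : (x, y) ∈ tsupport (Function.uncurry W) := subset_tsupport _ hxy
      exact ⟨⟨(x, y), this, rfl⟩, ⟨(x, y), this, rfl⟩⟩
    -- pointwise Fubini on the fibers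
    have stepA : ∀ q : G ⧸ H, Qav ν (fun x => ∫ y, W x y ∂νR) q
        = ∫ y, Qav ν (fun x => W x y) q ∂νR := by
      intro q
      show (∫ h : ↥H, ∫ y, W (q.out * ↑h) y ∂νR ∂ν) = ∫ y, ∫ h : ↥H, W (q.out * ↑h) y ∂ν ∂νR
      apply integral_integral_swap_of_hasCompactSupport
      · exact hW.comp ((continuous_const.mul
          (continuous_subtype_val.comp continuous_fst)).prodMk continuous_snd)
      · apply HasCompactSupport.intro
          (((hH.isClosedEmbedding_subtypeVal).isCompact_preimage
            (K₁comp.image (continuous_const.mul continuous_id))).prod K₂comp)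
        rintro ⟨h, y⟩ hp
        by_contra hne
        apply hp
        obtain ⟨h1, h2⟩ := memK _ _ hne
        refine ⟨?_, h2⟩
        show (↑h : G) ∈ (fun z => q.out⁻¹ * z) '' K₁
        exact ⟨q.out * ↑h, h1, by group⟩
    simp_rw [stepA]
    -- outer swap
    set Φ : (G ⧸ H) → G → ℝ := fun q y => Qav ν (fun x => W x y) q with hΦdef
    have hΦcont : Continuous (Function.uncurry Φ) := by
      rw [← (QuotientGroup.isOpenQuotientMap_mk.prodMap
        IsOpenQuotientMap.id).continuous_comp_iff]
      have : (Function.uncurry Φ) ∘ (Prod.map (QuotientGroup.mk : G → G ⧸ H) id)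
          = fun p : G × G => ∫ h : ↥H, W (p.1 * ↑h) p.2 ∂ν := by
        funext p
        show Φ (QuotientGroup.mk p.1) p.2 = _
        rw [hΦdef]
        show Qav ν (fun x => W x p.2) (QuotientGroup.mk p.1) = _
        rw [Qav_mk]
        rfl
      rw [this]
      exact continuous_Pav_param (X := G × G) (c := Prod.fst) hH ν (fun p z => W z p.2)
        (hW.comp (continuous_snd.prodMk (continuous_snd.comp continuous_fst)))
        K₁comp (fun p z hz => by
          by_contra hne
          exact hz (memK _ _ hne).1) continuous_fst
    have hΦsupp : HasCompactSupport (Function.uncurry Φ) := by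
      apply HasCompactSupport.intro
        ((K₁comp.image QuotientGroup.isOpenQuotientMap_mk.continuous).prod K₂comp)
      rintro ⟨q, y⟩ hp
      by_contra hne
      apply hp
      obtain ⟨h, hh⟩ := ModularAux.exists_ne_zero_of_integral_ne_zero hne
      obtain ⟨h1, h2⟩ := memK _ _ hh
      refine ⟨⟨q.out * ↑h, h1, ?_⟩, h2⟩
      rw [QuotientGroup.mk_mul_of_mem _ h.2, QuotientGroup.out_eq']
    exact integral_integral_swap_of_hasCompactSupport hΦcont hΦsupp
  -- scalar multiplication
  have lam_smul : ∀ (C : ℝ) (f : G → ℝ),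
      ∫ q, Qav ν (fun x => C * f x) q ∂ξ = C * ∫ q, Qav ν f q ∂ξ := by
    intro C f
    have : ∀ q : G ⧸ H, Qav ν (fun x => C * f x) q = C * Qav ν f q := by
      intro q
      show (∫ h : ↥H, C * f (q.out * ↑h) ∂ν) = C * ∫ h : ↥H, f (q.out * ↑h) ∂ν
      exact integral_const_mul C _
    simp_rw [this]
    exact integral_const_mul C _
  -- positivity of the functional at g₀
  have lam_g₀_pos : 0 < ∫ q, Qav ν g₀ q ∂ξ := by
    have hQcont : Continuous (Qav ν g₀) := continuous_Qav hH ν g₀cont g₀comp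
    have hQcomp : HasCompactSupport (Qav ν g₀) := hasCompactSupport_Qav hH ν g₀comp
    apply (integral_pos_iff_support_of_nonneg _ _).2
    · apply hQcont.isOpen_support.measure_pos ξ
      refine ⟨QuotientGroup.mk 1, ?_⟩
      rw [Function.mem_support, Qav_mk]
      have hpos : 0 < Pav ν g₀ 1 := by
        apply (integral_pos_iff_support_of_nonneg _ _).2
        · apply (g₀cont.comp (continuous_const.mul continuous_subtype_val)).isOpen_support.measure_pos ν
          refine ⟨1, ?_⟩
          simpa using g₀one
        · intro h
          exact g₀nonneg _
        · apply (g₀cont.comp (continuous_const.mul continuous_subtype_val)).integrable_of_hasCompactSupport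
          apply HasCompactSupport.intro
            ((hH.isClosedEmbedding_subtypeVal).isCompact_preimage
              ((g₀comp.image (continuous_const.mul continuous_id))))
          intro h hh
          by_contra hne
          apply hh
          show (↑h : G) ∈ (fun z => (1:G) * z) '' tsupport g₀
          refine ⟨1 * ↑h, ?_, by group⟩
          apply subset_tsupport
          simpa using hne
      exact hpos.ne'
    · intro q
      show 0 ≤ Pav ν g₀ q.out
      exact integral_nonneg fun h => g₀nonneg _
    · exact hQcont.integrable_of_hasCompactSupport hQcomp
  -- the uniqueness-style identity, for the Haar measure μ
  have comboμ : ∀ f : G → ℝ, Continuous f → HasCompactSupport f →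
      ∫ x, f x ∂μ = (∫ y, f y * (D y)⁻¹ ∂νR) * ∫ x, g₀ x ∂μ := by
    intro f hf h'f
    exact integral_isMulLeftInvariant_isMulRightInvariant_combo hf h'f g₀cont g₀comp
      g₀nonneg g₀one
  -- the uniqueness-style identity, for the quotient functional
  have comboΛ : ∀ f : G → ℝ, Continuous f → HasCompactSupport f →
      ∫ q, Qav ν f q ∂ξ = (∫ y, f y * (D y)⁻¹ ∂νR) * ∫ q, Qav ν g₀ q ∂ξ := by
    intro f hf h'f
    have e1 : f = fun x => f x * (D x)⁻¹ * D x := by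
      funext x; rw [mul_assoc, inv_mul_cancel₀ (D_pos x).ne', mul_one]
    have e2 : (fun x => f x * (D x)⁻¹ * D x)
        = fun x => ∫ y, f x * (D x)⁻¹ * g₀ (y⁻¹ * x) ∂νR := by
      funext x
      exact (integral_const_mul (f x * (D x)⁻¹) _).symm
    calc ∫ q, Qav ν f q ∂ξ
        = ∫ q, Qav ν (fun x => ∫ y, f x * (D x)⁻¹ * g₀ (y⁻¹ * x) ∂νR) q ∂ξ := by
          rw [← e2, ← e1]
      _ = ∫ y, (∫ q, Qav ν (fun x => f x * (D x)⁻¹ * g₀ (y⁻¹ * x)) q ∂ξ) ∂νR := by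
          apply lam_fubini (fun x y => f x * (D x)⁻¹ * g₀ (y⁻¹ * x))
          · apply Continuous.mul
            · exact (hf.comp continuous_fst).mul
                ((D_cont.comp continuous_fst).inv₀ (fun x => (D_pos _).ne'))
            · exact g₀cont.comp (continuous_snd.inv.mul continuous_fst)
          · let K := tsupport f
            have K_comp : IsCompact K := h'f
            let L := tsupport g₀
            have L_comp : IsCompact L := g₀comp
            let M := (fun (p : G × G) => p.1 * p.2⁻¹) '' (K ×ˢ L)
            have M_comp : IsCompact M :=
              (K_comp.prod L_comp).image (continuous_fst.mul continuous_snd.inv)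
            have M'_comp : IsCompact (closure M) := M_comp.closure
            apply HasCompactSupport.intro (K_comp.prod M'_comp)
            rintro ⟨x, y⟩ hxy
            by_cases hxK : x ∈ K
            · have : g₀ (y⁻¹ * x) = 0 := by
                apply image_eq_zero_of_notMem_tsupport
                intro hgy
                apply hxy
                refine ⟨hxK, subset_closure ?_⟩
                exact ⟨(x, y⁻¹ * x), ⟨hxK, hgy⟩, by group⟩
              show f x * (D x)⁻¹ * g₀ (y⁻¹ * x) = 0
              rw [this, mul_zero]
            · show f x * (D x)⁻¹ * g₀ (y⁻¹ * x) = 0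
              rw [image_eq_zero_of_notMem_tsupport hxK, zero_mul, zero_mul]
      _ = ∫ y, (∫ q, Qav ν (fun x => f (y * x) * (D (y * x))⁻¹ * g₀ x) q ∂ξ) ∂νR := by
          refine integral_congr_ae (Filter.Eventually.of_forall fun y => ?_)
          have hF : (fun x => f (y * x) * (D (y * x))⁻¹ * g₀ x)
              = fun x => (fun x' => f x' * (D x')⁻¹ * g₀ (y⁻¹ * x')) (y * x) := by
            funext x; simp
          show (∫ q, Qav ν (fun x => f x * (D x)⁻¹ * g₀ (y⁻¹ * x)) q ∂ξ)
              = ∫ q, Qav ν (fun x => f (y * x) * (D (y * x))⁻¹ * g₀ x) q ∂ξ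
          rw [hF]
          refine (lam_inv y _ ?_ ?_).symm
          · exact (hf.mul (D_cont.inv₀ fun x => (D_pos _).ne')).mul
              (g₀cont.comp (continuous_const.mul continuous_id))
          · apply HasCompactSupport.intro h'f
            intro x hx
            rw [image_eq_zero_of_notMem_tsupport hx, zero_mul, zero_mul]
      _ = ∫ q, Qav ν (fun x => ∫ y, f (y * x) * (D (y * x))⁻¹ * g₀ x ∂νR) q ∂ξ := by
          refine (lam_fubini (fun x y => f (y * x) * (D (y * x))⁻¹ * g₀ x) ?_ ?_).symm
          · apply Continuous.mul ?_ (g₀cont.comp continuous_fst)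
            exact (hf.comp (continuous_snd.mul continuous_fst)).mul
              ((D_cont.comp (continuous_snd.mul continuous_fst)).inv₀ (fun x => (D_pos _).ne'))
          · let K := tsupport f
            have K_comp : IsCompact K := h'f
            let L := tsupport g₀
            have L_comp : IsCompact L := g₀comp
            let M := (fun (p : G × G) => p.1 * p.2⁻¹) '' (K ×ˢ L)
            have M_comp : IsCompact M :=
              (K_comp.prod L_comp).image (continuous_fst.mul continuous_snd.inv)
            have M'_comp : IsCompact (closure M) := M_comp.closure
            apply HasCompactSupport.intro (L_comp.prod M'_comp)
            rintro ⟨x, y⟩ hxy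
            by_cases hxL : x ∈ L
            · have : f (y * x) = 0 := by
                apply image_eq_zero_of_notMem_tsupport
                intro hfyx
                apply hxy
                refine ⟨hxL, subset_closure ?_⟩
                exact ⟨(y * x, x), ⟨hfyx, hxL⟩, by group⟩
              show f (y * x) * (D (y * x))⁻¹ * g₀ x = 0
              rw [this, zero_mul, zero_mul]
            · show f (y * x) * (D (y * x))⁻¹ * g₀ x = 0
              rw [image_eq_zero_of_notMem_tsupport hxL, mul_zero]
      _ = ∫ q, Qav ν (fun x => (∫ y, f y * (D y)⁻¹ ∂νR) * g₀ x) q ∂ξ := by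
          have e : (fun x => ∫ y, f (y * x) * (D (y * x))⁻¹ * g₀ x ∂νR)
              = fun x => (∫ y, f y * (D y)⁻¹ ∂νR) * g₀ x := by
            funext x
            rw [integral_mul_const]
            rw [integral_mul_right_eq_self (μ := νR) (fun y => f y * (D y)⁻¹) x]
          rw [e]
      _ = (∫ y, f y * (D y)⁻¹ ∂νR) * ∫ q, Qav ν g₀ q ∂ξ := lam_smul _ g₀
  -- conclusion
  have key : ∀ h₀ : ↥H, ΔG ((h₀ : G)⁻¹) = ΔH h₀⁻¹ := by
    intro h₀
    set R : G → ℝ := fun x => g₀ (x * (h₀ : G)) with hRdef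
    have Rcont : Continuous R := g₀cont.comp (continuous_mul_right _)
    have Rcomp : HasCompactSupport R := g₀comp.comp_homeomorph (Homeomorph.mulRight (h₀ : G))
    have hΛR : ∫ q, Qav ν R q ∂ξ = ΔH h₀⁻¹ * ∫ q, Qav ν g₀ q ∂ξ := by
      have hQ : ∀ q : G ⧸ H, Qav ν R q = ΔH h₀⁻¹ * Qav ν g₀ q := by
        intro q
        show (∫ h : ↥H, g₀ (q.out * ↑h * (h₀ : G)) ∂ν)
            = ΔH h₀⁻¹ * ∫ h : ↥H, g₀ (q.out * ↑h) ∂ν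
        have e : ∀ h : ↥H, g₀ (q.out * ↑h * (h₀ : G))
            = (fun k : ↥H => g₀ (q.out * ↑k)) (h * h₀) := by
          intro h; simp [mul_assoc]
        simp_rw [e]
        exact int_ν h₀ (fun k : ↥H => g₀ (q.out * ↑k))
          (g₀cont.comp (by fun_prop))
      simp_rw [hQ]
      exact integral_const_mul _ _
    have hWR_Λ := comboΛ R Rcont Rcomp
    have hWR_μ := comboμ R Rcont Rcomp
    have hμR : ∫ x, R x ∂μ = ΔG ((h₀ : G)⁻¹) * ∫ x, g₀ x ∂μ := int_μ (h₀ : G) g₀ g₀cont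
    have eμ : (∫ y, R y * (D y)⁻¹ ∂νR) = ΔG ((h₀ : G)⁻¹) :=
      mul_right_cancel₀ int_g₀_pos.ne' (hWR_μ.symm.trans hμR)
    have eΛ : (∫ y, R y * (D y)⁻¹ ∂νR) = ΔH h₀⁻¹ :=
      mul_right_cancel₀ lam_g₀_pos.ne' (hWR_Λ.symm.trans hΛR)
    exact eμ.symm.trans eΛ
  intro h
  have := key h⁻¹
  simpa using this
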